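/- Let Ω, ∂Ω, σ, n be as in the context. Let φ : ℝ^d → ℝ be C² on a neighborhood of the closure of Ω, satisfying −Δφ = E·φ on Ω and ∫_Ω φ(x)² dx = 1. Then ∫_{∂Ω} [ (d−2)·φ(x)·⟨n(x),∇φ(x)⟩ + ⟨x,n(x)⟩(E·φ(x)² − ‖∇φ(x)‖²) + 2·⟨x,∇φ(x)⟩·⟨n(x),∇φ(x)⟩ ] dσ(x) = 2E. (This normalization formula involves only boundary values and first derivatives of φ and requires no boundary conditions.) -/

import Mathlib

open MeasureTheory
open scoped RealInnerProductSpace Classical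

noncomputable section

/-- The Euclidean Laplacian: the sum of the second partial derivatives. -/
def lap {d : ℕ} (u : EuclideanSpace ℝ (Fin d) → ℝ) (x : EuclideanSpace ℝ (Fin d)) : ℝ :=
  ∑ i, fderiv ℝ (fun y => fderiv ℝ u y (EuclideanSpace.single i (1:ℝ))) x
    (EuclideanSpace.single i (1:ℝ))

/-- The divergence: the sum of the partial derivatives of the components. -/
def divg {d : ℕ} (F : EuclideanSpace ℝ (Fin d) → EuclideanSpace ℝ (Fin d))
    (x : EuclideanSpace ℝ (Fin d)) : ℝ :=
  ∑ i, fderiv ℝ (fun y => ⟪F y, EuclideanSpace.single i (1:ℝ)⟫) x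
    (EuclideanSpace.single i (1:ℝ))

/-! The Rellich–Pohozaev field `F = (d - 2) φ ∇φ + (E φ² - ‖∇φ‖²) x + 2 ⟪x, ∇φ⟫ ∇φ` satisfies
`div F = (d - 2) φ Δφ + d E φ² + 2 ⟪x, ∇φ⟫ (Δφ + E φ)`: the `‖∇φ‖²` terms cancel, and the
Hessian terms `⟪∇φ, D²φ x⟫` and `⟪x, D²φ ∇φ⟫` cancel by symmetry of the second derivative.
For `-Δφ = E φ` this is `2 E φ²`, so Gauss–Green turns `2 E = ∫_Ω 2 E φ²` into the boundary
integral of `⟪F, n⟫`. -/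

section

variable {d : ℕ}

local notation "𝔼" => EuclideanSpace ℝ (Fin d)

theorem divg_eq_trace_fderiv {F : 𝔼 → 𝔼} {x : 𝔼} (hF : DifferentiableAt ℝ F x) :
    divg F x = LinearMap.trace ℝ 𝔼 (fderiv ℝ F x : 𝔼 →ₗ[ℝ] 𝔼) := by
  rw [LinearMap.trace_eq_sum_inner _ (EuclideanSpace.basisFun (Fin d) ℝ), divg]
  refine Finset.sum_congr rfl fun i _ => ?_
  rw [fderiv_inner_apply ℝ hF (differentiableAt_const _)]
  simp [real_inner_comm]

theorem divg_add {F G : 𝔼 → 𝔼} {x : 𝔼} (hF : DifferentiableAt ℝ F x)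
    (hG : DifferentiableAt ℝ G x) :
    divg (fun y => F y + G y) x = divg F x + divg G x := by
  rw [divg_eq_trace_fderiv (hF.fun_add hG), divg_eq_trace_fderiv hF, divg_eq_trace_fderiv hG,
    fderiv_fun_add hF hG]
  simp

theorem divg_smul {f : 𝔼 → ℝ} {G : 𝔼 → 𝔼} {x : 𝔼} (hf : DifferentiableAt ℝ f x)
    (hG : DifferentiableAt ℝ G x) :
    divg (fun y => f y • G y) x = f x * divg G x + fderiv ℝ f x (G x) := by
  rw [divg_eq_trace_fderiv (hf.fun_smul hG), divg_eq_trace_fderiv hG, fderiv_fun_smul hf hG]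
  simp

theorem divg_id (x : 𝔼) : divg (fun y => y) x = d := by
  rw [divg_eq_trace_fderiv differentiableAt_fun_id, fderiv_fun_id]
  simp

theorem divg_gradient (φ : 𝔼 → ℝ) (x : 𝔼) : divg (gradient φ) x = lap φ x := by
  simp only [divg, lap, inner_gradient_left]

theorem inner_fderiv_gradient (φ : 𝔼 → ℝ) (x v w : 𝔼) :
    ⟪fderiv ℝ (gradient φ) x v, w⟫ = fderiv ℝ (fderiv ℝ φ) x v w := by
  have hgrad : gradient φ = (InnerProductSpace.toDual ℝ 𝔼).symm ∘ fderiv ℝ φ := rfl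
  rw [hgrad, LinearIsometryEquiv.comp_fderiv]
  exact InnerProductSpace.toDual_symm_apply

theorem inner_fderiv_gradient_comm {φ : 𝔼 → ℝ} {x : 𝔼} (hφ : ContDiffAt ℝ 2 φ x) (v w : 𝔼) :
    ⟪fderiv ℝ (gradient φ) x v, w⟫ = ⟪v, fderiv ℝ (gradient φ) x w⟫ := by
  rw [inner_fderiv_gradient, real_inner_comm _ v, inner_fderiv_gradient]
  exact hφ.isSymmSndFDerivAt (by simp) v w

theorem ContDiffAt.gradient {n : WithTop ℕ∞} {φ : 𝔼 → ℝ} {x : 𝔼}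
    (hφ : ContDiffAt ℝ (n + 1) φ x) : ContDiffAt ℝ n (gradient φ) x :=
  (InnerProductSpace.toDual ℝ _).symm.contDiff.contDiffAt.comp x (hφ.fderiv_right le_rfl)

theorem ContDiffOn.gradient_of_isOpen {n : WithTop ℕ∞} {φ : 𝔼 → ℝ} {U : Set 𝔼}
    (hφ : ContDiffOn ℝ (n + 1) φ U) (hU : IsOpen U) : ContDiffOn ℝ n (gradient φ) U :=
  (InnerProductSpace.toDual ℝ _).symm.contDiff.comp_contDiffOn (hφ.fderiv_of_isOpen hU le_rfl)

def rellichField (E : ℝ) (φ : 𝔼 → ℝ) (y : 𝔼) : 𝔼 :=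
  (((d : ℝ) - 2) * φ y) • gradient φ y + (E * φ y ^ 2 - ‖gradient φ y‖ ^ 2) • y
    + (2 * ⟪y, gradient φ y⟫) • gradient φ y

theorem divg_rellichField {E : ℝ} {φ : 𝔼 → ℝ} {x : 𝔼} (hφ : ContDiffAt ℝ 2 φ x) :
    divg (rellichField E φ) x = ((d : ℝ) - 2) * φ x * lap φ x + d * E * φ x ^ 2
      + 2 * ⟪x, gradient φ x⟫ * (lap φ x + E * φ x) := by
  have hφ' : HasFDerivAt φ (fderiv ℝ φ x) x :=
    (hφ.differentiableAt two_ne_zero).hasFDerivAt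
  have hg : HasFDerivAt (gradient φ) (fderiv ℝ (gradient φ) x) x :=
    ((hφ.gradient (n := 1)).differentiableAt one_ne_zero).hasFDerivAt
  have hA := hφ'.const_mul ((d : ℝ) - 2)
  have hB : HasFDerivAt (fun y => E * φ y ^ 2 - ‖gradient φ y‖ ^ 2) _ x :=
    ((hφ'.pow 2).const_mul E).sub hg.norm_sq
  have hid : HasFDerivAt (fun y : 𝔼 => y) _ x := hasFDerivAt_id (𝕜 := ℝ) x
  have hC : HasFDerivAt (fun y => 2 * ⟪y, gradient φ y⟫) _ x := (hid.inner ℝ hg).const_mul 2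
  have dA := hA.differentiableAt.fun_smul hg.differentiableAt
  have dB := hB.differentiableAt.fun_smul hid.differentiableAt
  have dC := hC.differentiableAt.fun_smul hg.differentiableAt
  unfold rellichField
  rw [divg_add (dA.fun_add dB) dC, divg_add dA dB,
    divg_smul hA.differentiableAt hg.differentiableAt,
    divg_smul hB.differentiableAt hid.differentiableAt,
    divg_smul hC.differentiableAt hg.differentiableAt, hA.fderiv, hB.fderiv, hC.fderiv,
    divg_gradient, divg_id]
  have hH := inner_fderiv_gradient_comm hφ (gradient φ x) x
  simp only [smul_apply, sub_apply,
    ContinuousLinearMap.comp_apply, ContinuousLinearMap.prod_apply, ContinuousLinearMap.id_apply,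
    fderivInnerCLM_apply, coe_innerSL_apply, smul_eq_mul, nsmul_eq_mul, Nat.cast_ofNat,
    ← inner_gradient_left]
  rw [real_inner_comm (fderiv ℝ (gradient φ) x (gradient φ x)) x, hH, real_inner_self_eq_norm_sq,
    real_inner_comm x (gradient φ x)]
  ring

theorem contDiffOn_rellichField {E : ℝ} {φ : 𝔼 → ℝ} {U : Set 𝔼} (hφ : ContDiffOn ℝ 2 φ U)
    (hU : IsOpen U) : ContDiffOn ℝ 1 (rellichField E φ) U := by
  have hg := hφ.gradient_of_isOpen (n := 1) hU
  have hφ1 := hφ.of_le one_le_two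
  exact (((contDiffOn_const.mul hφ1).smul hg).add
    (((contDiffOn_const.mul (hφ1.pow 2)).sub (hg.norm_sq ℝ)).smul contDiffOn_id)).add
    ((contDiffOn_const.mul (contDiffOn_id.inner ℝ hg)).smul hg)

theorem inner_rellichField (E : ℝ) (φ : 𝔼 → ℝ) (x v : 𝔼) :
    ⟪rellichField E φ x, v⟫ = ((d : ℝ) - 2) * φ x * ⟪v, gradient φ x⟫
      + ⟪x, v⟫ * (E * φ x ^ 2 - ‖gradient φ x‖ ^ 2)
      + 2 * ⟪x, gradient φ x⟫ * ⟪v, gradient φ x⟫ := by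
  simp only [rellichField, inner_add_left, real_inner_smul_left,
    real_inner_comm v (gradient φ x)]
  ring

end

theorem boundary_normalization_general_general
    (d : ℕ) (Ω : Set (EuclideanSpace ℝ (Fin d)))
    (hΩo : IsOpen Ω)
    (n : EuclideanSpace ℝ (Fin d) → EuclideanSpace ℝ (Fin d))
    (hGG : ∀ F : EuclideanSpace ℝ (Fin d) → EuclideanSpace ℝ (Fin d),
      (∃ U, IsOpen U ∧ closure Ω ⊆ U ∧ ContDiffOn ℝ 1 F U) →
      (∫ x in Ω, divg F x) = ∫ x in frontier Ω, ⟪F x, n x⟫ ∂(μH[(d:ℝ) - 1]))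
    (φ : EuclideanSpace ℝ (Fin d) → ℝ) (En : ℝ)
    (hφr : ∃ U, IsOpen U ∧ closure Ω ⊆ U ∧ ContDiffOn ℝ 2 φ U)
    (hHφ : ∀ x ∈ Ω, -lap φ x = En * φ x)
    (hφnorm : (∫ x in Ω, (φ x) ^ 2) = 1) :
    (∫ x in frontier Ω,
        (((d : ℝ) - 2) * φ x * ⟪n x, gradient φ x⟫
          + ⟪x, n x⟫ * (En * (φ x) ^ 2 - ‖gradient φ x‖ ^ 2)
          + 2 * ⟪x, gradient φ x⟫ * ⟪n x, gradient φ x⟫) ∂(μH[(d:ℝ) - 1]))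
      = 2 * En := by
  obtain ⟨U, hUo, hΩU, hφU⟩ := hφr
  have hdiv : ∀ x ∈ Ω, divg (rellichField En φ) x = 2 * En * φ x ^ 2 := fun x hx => by
    rw [divg_rellichField (hφU.contDiffAt (hUo.mem_nhds (hΩU (subset_closure hx))))]
    linear_combination (-((d : ℝ) - 2) * φ x - 2 * ⟪x, gradient φ x⟫) * hHφ x hx
  calc _ = ∫ x in frontier Ω, ⟪rellichField En φ x, n x⟫ ∂(μH[(d:ℝ) - 1]) := by
        simp only [inner_rellichField]
    _ = ∫ x in Ω, divg (rellichField En φ) x :=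
        (hGG _ ⟨U, hUo, hΩU, contDiffOn_rellichField hφU hUo⟩).symm
    _ = ∫ x in Ω, 2 * En * φ x ^ 2 := setIntegral_congr_fun hΩo.measurableSet hdiv
    _ = 2 * En := by rw [integral_const_mul, hφnorm, mul_one]

theorem boundary_normalization_general
    (d : ℕ) (hd : 2 ≤ d) (Ω : Set (EuclideanSpace ℝ (Fin d)))
    (hΩo : IsOpen Ω) (hΩb : Bornology.IsBounded Ω)
    (n : EuclideanSpace ℝ (Fin d) → EuclideanSpace ℝ (Fin d))
    (hGG : ∀ F : EuclideanSpace ℝ (Fin d) → EuclideanSpace ℝ (Fin d),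
      (∃ U, IsOpen U ∧ closure Ω ⊆ U ∧ ContDiffOn ℝ 1 F U) →
      (∫ x in Ω, divg F x) = ∫ x in frontier Ω, ⟪F x, n x⟫ ∂(μH[(d:ℝ) - 1]))
    (φ : EuclideanSpace ℝ (Fin d) → ℝ) (En : ℝ)
    (hφr : ∃ U, IsOpen U ∧ closure Ω ⊆ U ∧ ContDiffOn ℝ 2 φ U)
    (hHφ : ∀ x ∈ Ω, -lap φ x = En * φ x)
    (hφnorm : (∫ x in Ω, (φ x) ^ 2) = 1) :
    (∫ x in frontier Ω,
        (((d : ℝ) - 2) * φ x * ⟪n x, gradient φ x⟫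
          + ⟪x, n x⟫ * (En * (φ x) ^ 2 - ‖gradient φ x‖ ^ 2)
          + 2 * ⟪x, gradient φ x⟫ * ⟪n x, gradient φ x⟫) ∂(μH[(d:ℝ) - 1]))
      = 2 * En :=
  boundary_normalization_general_general d Ω hΩo n hGG φ En hφr hHφ hφnorm
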